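/- arXiv:2010.11442 — 11 statements merged into one kernel-verified Lean document; each statement's English description precedes it below -/
import Mathlib

section
/- Let (L, δ) be a lattice diversity and define d_δ(a, b) = δ(a ∨ b) for atoms a, b of L. Then d_δ is a metric on the set of atoms of L: it is nonnegative, symmetric, satisfies d_δ(a, b) = 0 if and only if a = b, and satisfies the triangle inequality d_δ(a, b) ≤ d_δ(a, c) + d_δ(c, b) for all atoms a, b, c. -/
/-- `(L, δ)` is a lattice diversity: `L` is a lattice with least element `⊥`,
`δ : L → ℝ` is nonnegative, vanishes exactly on `⊥` and the atoms, is monotone,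
and is subadditive on non-disjoint elements. -/
def IsLatticeDiversity {L : Type*} [Lattice L] [OrderBot L] (δ : L → ℝ) : Prop :=
  (∀ a : L, 0 ≤ δ a) ∧
  (∀ a : L, δ a = 0 ↔ a = ⊥ ∨ IsAtom a) ∧
  (∀ a b : L, a ≤ b → δ a ≤ δ b) ∧
  (∀ a b : L, a ⊓ b ≠ ⊥ → δ (a ⊔ b) ≤ δ a + δ b)

theorem stmt_2 {L : Type*} [Lattice L] [OrderBot L] (δ : L → ℝ)
    (hδ : IsLatticeDiversity δ) :
    (∀ a b : L, IsAtom a → IsAtom b → 0 ≤ δ (a ⊔ b)) ∧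
    (∀ a b : L, IsAtom a → IsAtom b → δ (a ⊔ b) = δ (b ⊔ a)) ∧
    (∀ a b : L, IsAtom a → IsAtom b → (δ (a ⊔ b) = 0 ↔ a = b)) ∧
    (∀ a b c : L, IsAtom a → IsAtom b → IsAtom c →
      δ (a ⊔ b) ≤ δ (a ⊔ c) + δ (c ⊔ b)) := by
  obtain ⟨hnn, hzero, hmono, hsub⟩ := hδ
  refine ⟨fun a b _ _ => hnn _, fun a b _ _ => by rw [sup_comm], ?_, ?_⟩
  · intro a b ha hb
    constructor
    · intro h
      rcases (hzero _).1 h with h' | h'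
      · exact absurd (le_bot_iff.1 (h' ▸ le_sup_left)) ha.1
      · rcases h'.le_iff.1 (le_sup_left : a ≤ a ⊔ b) with h1 | h1
        · exact absurd h1 ha.1
        · rcases h'.le_iff.1 (le_sup_right : b ≤ a ⊔ b) with h2 | h2
          · exact absurd h2 hb.1
          · exact h1.trans h2.symm
    · rintro rfl
      exact (hzero _).2 (Or.inr (by simpa using ha))
  · intro a b c ha hb hc
    have hinf : (a ⊔ c) ⊓ (c ⊔ b) ≠ ⊥ := by
      intro h
      exact hc.1 (le_bot_iff.1 (h ▸ le_inf le_sup_right le_sup_left))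
    calc δ (a ⊔ b) ≤ δ ((a ⊔ c) ⊔ (c ⊔ b)) :=
          hmono _ _ (sup_le (le_sup_of_le_left le_sup_left) (le_sup_of_le_right le_sup_right))
      _ ≤ δ (a ⊔ c) + δ (c ⊔ b) := hsub _ _ hinf
end

section
/- Let L be a modular lattice with a least element 0 that is sectionally of finite height, i.e., for every a ∈ L the interval [0, a] has finite height h(a). Define δ_h : L → ℝ≥0 by δ_h(0) = 0 and δ_h(a) = h(a) − 1 for a ≠ 0. Then (L, δ_h) is a lattice diversity which is strictly monotone: for all nonzero a, b with a < b one has δ_h(a) < δ_h(b). -/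
open Order

namespace Order

variable {α : Type*}

theorem height_add_le_of_forall_add_one_le [Preorder α] {x : α} {c : ℕ∞} (g : α → ℕ∞)
    (hc : ∀ a ≤ x, c ≤ g a) (hg : ∀ a b, a < b → b ≤ x → g a + 1 ≤ g b) :
    height x + c ≤ g x := by
  have : Nonempty {p : LTSeries α // p.last = x} := ⟨⟨RelSeries.singleton _ x, rfl⟩⟩
  rw [height_eq_iSup_last_eq, iSup_subtype', ENat.iSup_add, iSup_le_iff]
  rintro ⟨p, rfl⟩
  suffices ∀ i : Fin (p.length + 1), (i : ℕ∞) + c ≤ g (p i) from this (Fin.last _)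
  intro i
  induction i using Fin.induction with
  | zero => simpa using hc _ (p.monotone (Fin.zero_le _))
  | succ i ih =>
    calc ((i.succ : ℕ) : ℕ∞) + c = ((i.castSucc : ℕ) + c) + 1 := by
          rw [Fin.val_succ, Fin.val_castSucc]; push_cast; ring
      _ ≤ g (p i.castSucc) + 1 := by gcongr
      _ ≤ g (p i.succ) := hg _ _ (p.step i) (p.monotone (Fin.le_last _))

theorem height_eq_one_iff_isAtom [PartialOrder α] [OrderBot α] {a : α} :
    height a = 1 ↔ IsAtom a := by
  constructor
  · intro ha
    refine ⟨fun h => by simp [h] at ha, fun b hb => ?_⟩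
    have hfin : height b < ⊤ := (height_mono hb.le).trans_lt (ha ▸ ENat.one_lt_top)
    have : height b < 1 := (height_strictMono hb hfin).trans_eq ha
    exact isMin_iff_eq_bot.1 (height_eq_zero.1 (Order.lt_one_iff.1 this))
  · intro ha
    refine le_antisymm (height_le_coe_iff.2 fun b hb => ?_) ?_
    · simp [ha.2 b hb]
    · simpa using height_add_one_le ha.bot_lt

end Order

section IsModularLattice

variable {α : Type*} [Lattice α] [IsModularLattice α]

theorem inf_lt_inf_or_sup_inf_lt_sup_inf {a b x y : α} (hxy : x < y) (hy : y ≤ a ⊔ b) :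
    x ⊓ b < y ⊓ b ∨ (x ⊔ b) ⊓ a < (y ⊔ b) ⊓ a := by
  refine or_iff_not_imp_left.2 fun hinf => inf_lt_inf_of_lt_of_sup_le_sup
    (sup_lt_sup_of_lt_of_inf_le_inf hxy ((inf_le_inf_right b hxy.le).eq_of_not_lt hinf).ge) ?_
  calc y ⊔ b ⊔ a ≤ a ⊔ b := sup_le (sup_le hy le_sup_right) le_sup_left
    _ ≤ x ⊔ b ⊔ a := sup_le le_sup_right (le_sup_right.trans le_sup_left)

theorem height_sup_add_height_inf_le (a b : α) :
    height (a ⊔ b) + height (a ⊓ b) ≤ height a + height b := by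
  have key := height_add_le_of_forall_add_one_le (x := a ⊔ b) (c := height (a ⊓ b))
    (fun x => height (x ⊓ b) + height ((x ⊔ b) ⊓ a)) ?_ ?_
  · simpa [add_comm (height b)] using key
  · intro x _
    exact le_add_left (height_mono (inf_comm a b ▸ inf_le_inf_right a le_sup_right))
  · intro x y hxy hy
    have hinf : x ⊓ b ≤ y ⊓ b := inf_le_inf_right b hxy.le
    have hsup : (x ⊔ b) ⊓ a ≤ (y ⊔ b) ⊓ a := inf_le_inf_right a (sup_le_sup_right hxy.le b)
    rcases inf_lt_inf_or_sup_inf_lt_sup_inf hxy hy with h | h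
    · exact (add_right_comm _ _ _).trans_le
        (add_le_add (height_add_one_le h) (height_mono hsup))
    · exact (add_assoc _ _ _).trans_le (add_le_add (height_mono hinf) (height_add_one_le h))

end IsModularLattice

theorem isLatticeDiversity_strictMono_of_rank {L : Type*} [Lattice L] [OrderBot L] {r : L → ℕ}
    (hr_bot : r ⊥ = 0) (hr : StrictMono r) (hr_atom : ∀ a, r a = 1 ↔ IsAtom a)
    (hr_sub : ∀ a b, r (a ⊔ b) + r (a ⊓ b) ≤ r a + r b)
    {δ : L → ℝ} (hδbot : δ ⊥ = 0) (hδ : ∀ a, a ≠ ⊥ → δ a = r a - 1) :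
    IsLatticeDiversity δ ∧ ∀ a b : L, a ≠ ⊥ → b ≠ ⊥ → a < b → δ a < δ b := by
  have hpos : ∀ a, a ≠ ⊥ → 1 ≤ r a := fun a ha => by
    have := hr (bot_lt_iff_ne_bot.2 ha)
    omega
  have hr_zero : ∀ a, r a = 0 ↔ a = ⊥ :=
    fun a => ⟨fun h => by_contra fun ha => by have := hpos a ha; omega, fun h => h ▸ hr_bot⟩
  -- truncated subtraction absorbs the case `a = ⊥`
  obtain rfl : δ = fun a => ((r a - 1 : ℕ) : ℝ) := by
    funext a
    rcases eq_or_ne a ⊥ with rfl | ha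
    · simp [hδbot, hr_bot]
    · rw [hδ a ha, Nat.cast_sub (hpos a ha), Nat.cast_one]
  refine ⟨⟨fun a => Nat.cast_nonneg _, fun a => ?_, fun a b hab => ?_, fun a b hab => ?_⟩,
    fun a b ha _ hab => ?_⟩
  all_goals beta_reduce
  · rw [Nat.cast_eq_zero, ← hr_zero, ← hr_atom]
    omega
  · exact_mod_cast Nat.sub_le_sub_right (hr.monotone hab) 1
  · have := hr_sub a b
    have := hpos _ hab
    have := hr.monotone (inf_le_left : a ⊓ b ≤ a)
    have := hr.monotone (inf_le_right : a ⊓ b ≤ b)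
    norm_cast
    omega
  · have := hpos a ha
    have := hr hab
    norm_cast
    omega

theorem stmt_5 {L : Type*} [Lattice L] [OrderBot L] [IsModularLattice L]
    (hfin : ∀ a : L, Order.height a ≠ ⊤)
    (δ : L → ℝ) (hδbot : δ ⊥ = 0)
    (hδdef : ∀ a : L, a ≠ ⊥ → δ a = ((Order.height a).toNat : ℝ) - 1) :
    IsLatticeDiversity δ ∧ ∀ a b : L, a ≠ ⊥ → b ≠ ⊥ → a < b → δ a < δ b := by
  have hr : ∀ a : L, ((height a).toNat : ℕ∞) = height a := fun a => ENat.natCast_toNat (hfin a)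
  refine isLatticeDiversity_strictMono_of_rank (r := fun a => (height a).toNat) (by simp)
    (fun a b hab => ?_) (fun a => ?_) (fun a b => ?_) hδbot hδdef
  · exact ENat.natCast_lt_natCast.1 <| by
      rw [hr, hr]
      exact height_strictMono hab (lt_top_iff_ne_top.2 (hfin a))
  · exact (ENat.toNat_eq_iff one_ne_zero).trans height_eq_one_iff_isAtom
  · exact ENat.natCast_le_natCast.1 <| by
      push_cast
      simpa only [hr] using height_sup_add_height_inf_le a b
end

section
/- Let L be a modular lattice with a least element 0 that is sectionally of finite height, with height function h. Define δ_c : L → ℝ≥0 by δ_c(a) = 0 if a = 0 or a is an atom of L, and δ_c(a) = h(a) otherwise. Then (L, δ_c) is a lattice diversity. -/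
open Order

namespace Order

variable {α β : Type*} [Preorder α] [Preorder β]

lemma height_add_height_add_one_le_of_lt {z : α × β} {x : α} {y : β} (hz : z < (x, y)) :
    height z.1 + height z.2 + 1 ≤ height x + height y := by
  rcases Prod.lt_iff.mp hz with ⟨h1, h2⟩ | ⟨h1, h2⟩
  · calc height z.1 + height z.2 + 1 = height z.1 + 1 + height z.2 := by ring
      _ ≤ height x + height y := add_le_add (height_add_one_le h1) (height_mono h2)
  · calc height z.1 + height z.2 + 1 = height z.1 + (height z.2 + 1) := by ring
      _ ≤ height x + height y := add_le_add (height_mono h1) (height_add_one_le h2)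

lemma height_prod_le_of_add_le (n : ℕ) :
    ∀ (x : α) (y : β), height x + height y ≤ n → height (x, y) ≤ n := by
  induction n with
  | zero =>
    intro x y h
    refine height_le_coe_iff.mpr fun z hz => ?_
    have := (height_add_height_add_one_le_of_lt hz).trans h
    simp at this
  | succ m ih =>
    intro x y h
    refine height_le_coe_iff.mpr fun z hz => ?_
    have hz' : height z.1 + height z.2 ≤ m := by
      have := (height_add_height_add_one_le_of_lt hz).trans h
      rwa [Nat.cast_succ, ENat.add_le_add_iff_right ENat.one_ne_top] at this
    calc height z = height (z.1, z.2) := rfl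
      _ ≤ m := ih z.1 z.2 hz'
      _ < (m + 1 : ℕ) := by exact_mod_cast m.lt_succ_self

lemma height_prod_le (x : α) (y : β) : height (x, y) ≤ height x + height y := by
  cases h : height x + height y with
  | top => exact le_top
  | coe n => exact height_prod_le_of_add_le n x y h.le

lemma height_top_Iic (x : α) : height (⊤ : Set.Iic x) = height x :=
  WithBot.coe_injective (by rw [height_top_eq_krullDim, height_eq_krullDim_Iic])

end Order

section Modular

variable {L : Type*} [Lattice L] [IsModularLattice L]

lemma strictMono_inf_prod_sup_inf_Iic_sup (a b : L) :
    StrictMono fun x : Set.Iic (a ⊔ b) => ((x : L) ⊓ a, ((x : L) ⊔ a) ⊓ b) := by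
  have hsup : ∀ x : Set.Iic (a ⊔ b), ((x : L) ⊔ a) ⊓ b ⊔ a = (x : L) ⊔ a := fun x => by
    rw [inf_sup_assoc_of_le b le_sup_right, sup_comm b a,
      inf_eq_left.mpr (sup_le x.2 le_sup_left)]
  intro x y hxy
  have hle : (x : L) ≤ y := hxy.le
  refine lt_of_le_of_ne ⟨inf_le_inf_right a hle, inf_le_inf_right b (sup_le_sup_right hle a)⟩
    fun heq => hxy.ne (Subtype.ext ?_)
  obtain ⟨hinf, hinf_sup⟩ := Prod.mk.inj heq
  refine eq_of_le_of_inf_le_of_sup_le hle hinf.ge ?_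
  rw [← hsup x, ← hsup y, hinf_sup]

lemma height_sup_le_height_add_height (a b : L) :
    height (a ⊔ b) ≤ height a + height b := by
  have hmap := height_le_height_apply_of_strictMono _
    (strictMono_inf_prod_sup_inf_Iic_sup a b) ⊤
  simp only [height_top_Iic, Set.Iic.coe_top, le_sup_left, inf_of_le_right, sup_of_le_left,
    le_sup_right] at hmap
  exact hmap.trans (height_prod_le a b)

end Modular

lemma eq_bot_or_isAtom_of_le {L : Type*} [PartialOrder L] [OrderBot L] {a b : L} (hab : a ≤ b)
    (hb : b = ⊥ ∨ IsAtom b) : a = ⊥ ∨ IsAtom a := by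
  rcases hb with rfl | hb
  · exact Or.inl (le_bot_iff.mp hab)
  · rcases hb.le_iff.mp hab with rfl | rfl
    · exact Or.inl rfl
    · exact Or.inr hb

lemma le_of_inf_ne_bot_of_eq_bot_or_isAtom {L : Type*} [Lattice L] [OrderBot L] {a b : L}
    (ha : a = ⊥ ∨ IsAtom a) (hab : a ⊓ b ≠ ⊥) : a ≤ b := by
  rcases ha with rfl | ha
  · exact bot_le
  · exact ha.not_disjoint_iff_le.mp (disjoint_iff.not.mpr hab)

section HeightDiversity

variable {L : Type*} [Lattice L] [OrderBot L]

open Classical in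
noncomputable def heightDiversity (a : L) : ℝ :=
  if a = ⊥ ∨ IsAtom a then 0 else ((height a).toNat : ℝ)

lemma heightDiversity_of_eq_bot_or_isAtom {a : L} (ha : a = ⊥ ∨ IsAtom a) :
    heightDiversity a = 0 := if_pos ha

lemma heightDiversity_of_not {a : L} (ha : ¬(a = ⊥ ∨ IsAtom a)) :
    heightDiversity a = ((height a).toNat : ℝ) := if_neg ha

lemma heightDiversity_nonneg (a : L) : 0 ≤ heightDiversity a := by
  unfold heightDiversity; split_ifs <;> positivity

lemma heightDiversity_le_toNat_height (a : L) : heightDiversity a ≤ ((height a).toNat : ℝ) := by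
  unfold heightDiversity; split_ifs <;> simp

variable (hfin : ∀ a : L, height a ≠ ⊤)
include hfin

lemma heightDiversity_eq_zero_iff (a : L) : heightDiversity a = 0 ↔ a = ⊥ ∨ IsAtom a := by
  refine ⟨fun h => ?_, heightDiversity_of_eq_bot_or_isAtom⟩
  by_contra ha
  have hbot : a ≠ ⊥ := fun h => ha (Or.inl h)
  have hpos : height a ≠ 0 := (height_pos_of_bot_lt (bot_lt_iff_ne_bot.mpr hbot)).ne'
  rw [heightDiversity_of_not ha, Nat.cast_eq_zero, ENat.toNat_eq_zero] at h
  exact h.elim hpos (hfin a)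

lemma heightDiversity_mono : Monotone (heightDiversity (L := L)) := by
  intro a b hab
  by_cases ha : a = ⊥ ∨ IsAtom a
  · rw [heightDiversity_of_eq_bot_or_isAtom ha]; exact heightDiversity_nonneg b
  have hb : ¬(b = ⊥ ∨ IsAtom b) := fun hb => ha (eq_bot_or_isAtom_of_le hab hb)
  rw [heightDiversity_of_not ha, heightDiversity_of_not hb]
  exact_mod_cast ENat.toNat_le_toNat (height_mono hab) (hfin b)

lemma heightDiversity_sup_le [IsModularLattice L] {a b : L} (hab : a ⊓ b ≠ ⊥) :
    heightDiversity (a ⊔ b) ≤ heightDiversity a + heightDiversity b := by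
  by_cases ha : a = ⊥ ∨ IsAtom a
  · rw [sup_eq_right.mpr (le_of_inf_ne_bot_of_eq_bot_or_isAtom ha hab)]
    linarith [heightDiversity_nonneg a]
  by_cases hb : b = ⊥ ∨ IsAtom b
  · rw [sup_eq_left.mpr (le_of_inf_ne_bot_of_eq_bot_or_isAtom hb (inf_comm a b ▸ hab))]
    linarith [heightDiversity_nonneg b]
  have htoNat : (height (a ⊔ b)).toNat ≤ (height a).toNat + (height b).toNat := by
    rw [← ENat.toNat_add (hfin a) (hfin b)]
    exact ENat.toNat_le_toNat (height_sup_le_height_add_height a b)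
      (WithTop.add_ne_top.mpr ⟨hfin a, hfin b⟩)
  calc heightDiversity (a ⊔ b) ≤ ((height (a ⊔ b)).toNat : ℝ) :=
        heightDiversity_le_toNat_height _
    _ ≤ (height a).toNat + (height b).toNat := by exact_mod_cast htoNat
    _ = heightDiversity a + heightDiversity b := by
        rw [heightDiversity_of_not ha, heightDiversity_of_not hb]

lemma isLatticeDiversity_heightDiversity [IsModularLattice L] :
    IsLatticeDiversity (heightDiversity (L := L)) :=
  ⟨heightDiversity_nonneg, heightDiversity_eq_zero_iff hfin,
    fun _ _ h => heightDiversity_mono hfin h, fun _ _ => heightDiversity_sup_le hfin⟩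

end HeightDiversity

theorem stmt_6 {L : Type*} [Lattice L] [OrderBot L] [IsModularLattice L]
    (hfin : ∀ a : L, Order.height a ≠ ⊤)
    (δ : L → ℝ)
    (hδzero : ∀ a : L, a = ⊥ ∨ IsAtom a → δ a = 0)
    (hδdef : ∀ a : L, a ≠ ⊥ → ¬ IsAtom a → δ a = ((Order.height a).toNat : ℝ)) :
    IsLatticeDiversity δ := by
  have hδ : δ = heightDiversity := funext fun a => by
    by_cases ha : a = ⊥ ∨ IsAtom a
    · rw [hδzero a ha, heightDiversity_of_eq_bot_or_isAtom ha]
    · rw [heightDiversity_of_not ha]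
      exact hδdef a (not_or.mp ha).1 (not_or.mp ha).2
  exact hδ ▸ isLatticeDiversity_heightDiversity hfin
end

section
/- Let L be a lattice with a least element 0 and let v : L → ℝ≥0 be a positive sub-valuation with v(0) = 0, i.e., v(a ∧ b) + v(a ∨ b) ≤ v(a) + v(b) for all a, b ∈ L, and a < b implies v(a) < v(b). Define δ_v : L → ℝ≥0 by δ_v(a) = 0 if a is an atom of L, and δ_v(a) = v(a) otherwise. Then (L, δ_v) is a lattice diversity which is strictly monotone: for all nonzero a, b with a < b one has δ_v(a) < δ_v(b). -/
theorem stmt_7 {L : Type*} [Lattice L] [OrderBot L]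
    (v : L → ℝ) (hvnn : ∀ a : L, 0 ≤ v a) (hvbot : v ⊥ = 0)
    (hvsub : ∀ a b : L, v (a ⊓ b) + v (a ⊔ b) ≤ v a + v b)
    (hvpos : ∀ a b : L, a < b → v a < v b)
    (δ : L → ℝ)
    (hδatom : ∀ a : L, IsAtom a → δ a = 0)
    (hδdef : ∀ a : L, ¬ IsAtom a → δ a = v a) :
    IsLatticeDiversity δ ∧ ∀ a b : L, a ≠ ⊥ → b ≠ ⊥ → a < b → δ a < δ b := by
  have hnn : ∀ a : L, 0 ≤ δ a := by
    intro a
    by_cases h : IsAtom a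
    · rw [hδatom a h]
    · rw [hδdef a h]; exact hvnn a
  have hle : ∀ a : L, δ a ≤ v a := by
    intro a
    by_cases h : IsAtom a
    · rw [hδatom a h]; exact hvnn a
    · rw [hδdef a h]
  have hmono : ∀ a b : L, a ≤ b → δ a ≤ δ b := by
    intro a b hab
    by_cases ha : IsAtom a
    · rw [hδatom a ha]; exact hnn b
    rw [hδdef a ha]
    by_cases hb : IsAtom b
    · rcases hb.le_iff.mp hab with h | h
      · subst h; rw [hvbot, hδatom b hb]
      · exact absurd (h ▸ ha) (fun c => c hb)
    · rw [hδdef b hb]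
      rcases eq_or_lt_of_le hab with h | h
      · exact h ▸ le_refl _
      · exact (hvpos a b h).le
  refine ⟨⟨hnn, ?_, hmono, ?_⟩, ?_⟩
  · intro a
    constructor
    · intro h0
      by_contra hc
      push_neg at hc
      obtain ⟨hb, ha⟩ := hc
      rw [hδdef a ha] at h0
      have := hvpos ⊥ a (bot_lt_iff_ne_bot.mpr hb)
      rw [hvbot, h0] at this
      exact lt_irrefl 0 this
    · rintro (rfl | ha)
      · rw [hδdef ⊥ (by simp [IsAtom]), hvbot]
      · exact hδatom a ha
  · intro a b hne
    by_cases ha : IsAtom a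
    · have : a ⊓ b = a := by
        rcases (ha.le_iff.mp inf_le_left) with h | h
        · exact absurd h hne
        · exact h
      have hab : a ≤ b := this ▸ inf_le_right
      rw [sup_eq_right.mpr hab, hδatom a ha]
      linarith [hnn b]
    by_cases hb : IsAtom b
    · have : a ⊓ b = b := by
        rcases (hb.le_iff.mp inf_le_right) with h | h
        · exact absurd h hne
        · exact h
      have hab : b ≤ a := this ▸ inf_le_left
      rw [sup_eq_left.mpr hab, hδatom b hb]
      linarith [hnn a]
    · rw [hδdef a ha, hδdef b hb]
      have h1 := hvsub a b
      have h2 := hle (a ⊔ b)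
      have h3 := hvnn (a ⊓ b)
      linarith
  · intro a b hane hbne hab
    have hb : ¬ IsAtom b := by
      intro hb
      rcases hb.le_iff.mp hab.le with h | h
      · exact hane h
      · exact hab.ne h
    rw [hδdef b hb]
    calc δ a ≤ v a := hle a
      _ < v b := hvpos a b hab
end

section
/- Let (L, δ) be a lattice diversity where L is a finite distributive lattice, and let J(L) be the set of join-irreducible elements of L. For finite A ⊆ J(L) define δ̂(A) = δ(⋁ A) if |A| ≥ 2 and δ̂(A) = 0 if |A| ≤ 1. Then δ̂ is a classical diversity on J(L): (i) δ̂(A) = 0 if and only if |A| ≤ 1; (ii) A ⊆ B implies δ̂(A) ≤ δ̂(B); (iii) if A ∩ B ≠ ∅ then δ̂(A ∪ B) ≤ δ̂(A) + δ̂(B). -/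
theorem stmt_9 {L : Type*} [DistribLattice L] [OrderBot L] [Fintype L] [DecidableEq L]
    (δ : L → ℝ) (hδ : IsLatticeDiversity δ)
    (d : Finset {a : L // SupIrred a} → ℝ)
    (hd : ∀ A : Finset {a : L // SupIrred a},
      d A = if 2 ≤ A.card then δ (A.sup fun x => (x : L)) else 0) :
    (∀ A : Finset {a : L // SupIrred a}, (d A = 0 ↔ A.card ≤ 1)) ∧
    (∀ A B : Finset {a : L // SupIrred a}, A ⊆ B → d A ≤ d B) ∧
    (∀ A B : Finset {a : L // SupIrred a}, (A ∩ B).Nonempty →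
      d (A ∪ B) ≤ d A + d B) := by
  obtain ⟨hnn, hzero, hmono, hsub⟩ := hδ
  have hd0 : ∀ A : Finset {a : L // SupIrred a}, A.card ≤ 1 → d A = 0 := by
    intro A hA
    rw [hd A, if_neg (by omega)]
  have hdnn : ∀ A : Finset {a : L // SupIrred a}, 0 ≤ d A := by
    intro A
    rw [hd A]
    split <;> [exact hnn _; rfl]
  refine ⟨?_, ?_, ?_⟩
  · intro A
    constructor
    · intro h
      by_contra hc
      push_neg at hc
      rw [hd A, if_pos (by omega)] at h
      rcases (hzero _).1 h with hb | hat
      · obtain ⟨x, hx⟩ := Finset.card_pos.1 (by omega : 0 < A.card)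
        exact x.2.ne_bot (le_bot_iff.1 (hb ▸ Finset.le_sup (f := fun (y : {a : L // SupIrred a}) => (y : L)) hx))
      · -- all elements of A equal the atom
        obtain ⟨x, hxA, y, hyA, hxy⟩ := Finset.one_lt_card.1 (by omega : 1 < A.card)
        have hx := Finset.le_sup (f := fun (y : {a : L // SupIrred a}) => (y : L)) hxA
        have hy := Finset.le_sup (f := fun (y : {a : L // SupIrred a}) => (y : L)) hyA
        have hx' : (x : L) = A.sup fun x => (x : L) :=
          ((hat.le_iff.1 hx).resolve_left x.2.ne_bot)
        have hy' : (y : L) = A.sup fun x => (x : L) :=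
          ((hat.le_iff.1 hy).resolve_left y.2.ne_bot)
        exact hxy (Subtype.ext (hx'.trans hy'.symm))
    · exact hd0 A
  · intro A B hAB
    by_cases hA : 2 ≤ A.card
    · rw [hd A, hd B, if_pos hA, if_pos (le_trans hA (Finset.card_le_card hAB))]
      exact hmono _ _ (Finset.sup_mono hAB)
    · rw [hd0 A (by omega)]
      exact hdnn B
  · intro A B ⟨x, hx⟩
    rw [Finset.mem_inter] at hx
    by_cases hA : 2 ≤ A.card <;> by_cases hB : 2 ≤ B.card
    · rw [hd A, hd B, hd (A ∪ B), if_pos hA, if_pos hB,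
        if_pos (le_trans hA (Finset.card_le_card Finset.subset_union_left)),
        Finset.sup_union]
      refine hsub _ _ fun h => x.2.ne_bot (le_bot_iff.1 (h ▸ le_inf ?_ ?_))
      · exact Finset.le_sup (f := fun (y : {a : L // SupIrred a}) => (y : L)) hx.1
      · exact Finset.le_sup (f := fun (y : {a : L // SupIrred a}) => (y : L)) hx.2
    · have : B = {x} := Finset.eq_singleton_iff_unique_mem.2
        ⟨hx.2, fun y hy => by
          by_contra hne
          exact hB (Finset.one_lt_card.2 ⟨y, hy, x, hx.2, hne⟩)⟩
      have hU : A ∪ B = A := by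
        rw [this]; exact Finset.union_eq_left.2 (Finset.singleton_subset_iff.2 hx.1)
      rw [hU, hd0 B (by omega)]
      linarith [hdnn A]
    · have : A = {x} := Finset.eq_singleton_iff_unique_mem.2
        ⟨hx.1, fun y hy => by
          by_contra hne
          exact hA (Finset.one_lt_card.2 ⟨y, hy, x, hx.1, hne⟩)⟩
      have hU : A ∪ B = B := by
        rw [this]; exact Finset.union_eq_right.2 (Finset.singleton_subset_iff.2 hx.2)
      rw [hU, hd0 A (by omega)]
      linarith [hdnn B]
    · have hAx : A = {x} := Finset.eq_singleton_iff_unique_mem.2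
        ⟨hx.1, fun y hy => by
          by_contra hne
          exact hA (Finset.one_lt_card.2 ⟨y, hy, x, hx.1, hne⟩)⟩
      have hBx : B = {x} := Finset.eq_singleton_iff_unique_mem.2
        ⟨hx.2, fun y hy => by
          by_contra hne
          exact hB (Finset.one_lt_card.2 ⟨y, hy, x, hx.2, hne⟩)⟩
      rw [hd0 (A ∪ B) (by rw [hAx, hBx]; simp), hd0 A (by omega), hd0 B (by omega)]
      norm_num
end

section
/- Let (L, δ) be a lattice diversity and f : L → ℝ≥0. Then f belongs to the tight span T_L if and only if for every a ∈ L, f(a) equals the supremum, over all finite subsets B of L, of δ(a ∨ ⋁ B) − ∑_{b ∈ B} f(b). -/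
/-- `f` belongs to `P_L`: `f` is a nonnegative real function on `L` such that
`∑_{b ∈ B} f(b) ≥ δ(⋁ B)` for every finite subset `B` of `L` (with `⋁ ∅ = ⊥`). -/
def MemP {L : Type*} [Lattice L] [OrderBot L] (δ f : L → ℝ) : Prop :=
  (∀ a : L, 0 ≤ f a) ∧ ∀ B : Finset L, δ (B.sup id) ≤ ∑ b ∈ B, f b

/-- `f` belongs to the tight span `T_L`: `f` is a minimal element of `P_L` under
the pointwise order. -/
def MemT {L : Type*} [Lattice L] [OrderBot L] (δ f : L → ℝ) : Prop :=
  MemP δ f ∧ ∀ g : L → ℝ, MemP δ g → (∀ a : L, g a ≤ f a) → g = f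

private lemma sum_insert_le' {L : Type*} [DecidableEq L] (f : L → ℝ)
    (hf : ∀ a, 0 ≤ f a) (a : L) (B : Finset L) :
    ∑ b ∈ insert a B, f b ≤ f a + ∑ b ∈ B, f b := by
  by_cases h : a ∈ B
  · rw [Finset.insert_eq_self.mpr h]
    have := hf a
    linarith
  · rw [Finset.sum_insert h]

theorem stmt_11 {L : Type*} [Lattice L] [OrderBot L] (δ : L → ℝ)
    (hδ : IsLatticeDiversity δ) (f : L → ℝ) (hfnn : ∀ a : L, 0 ≤ f a) :
    MemT δ f ↔ ∀ a : L,
      IsLUB {r : ℝ | ∃ B : Finset L, r = δ (a ⊔ B.sup id) - ∑ b ∈ B, f b} (f a) := by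
  classical
  obtain ⟨hnn, hzero, hmono, hsub⟩ := hδ
  have hbot : δ ⊥ = 0 := (hzero ⊥).mpr (Or.inl rfl)
  -- `f a` is an upper bound of the set as soon as `f ∈ P`.
  have hub : ∀ (h : L → ℝ), MemP δ h → ∀ a : L,
      (h a) ∈ upperBounds {r : ℝ | ∃ B : Finset L, r = δ (a ⊔ B.sup id) - ∑ b ∈ B, h b} := by
    rintro h ⟨hhnn, hhP⟩ a r ⟨B, rfl⟩
    have h1 : δ ((insert a B).sup id) ≤ ∑ b ∈ insert a B, h b := hhP (insert a B)
    rw [Finset.sup_insert] at h1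
    have h2 := sum_insert_le' h hhnn a B
    simp only [id] at h1
    linarith
  constructor
  · rintro ⟨hfP, hmin⟩ a
    refine ⟨hub f hfP a, ?_⟩
    rintro u hu
    -- `u ≥ δ a ≥ 0`
    have hu0 : δ a ≤ u := by
      have : δ a ∈ {r : ℝ | ∃ B : Finset L, r = δ (a ⊔ B.sup id) - ∑ b ∈ B, f b} :=
        ⟨∅, by simp⟩
      exact hu this
    set g : L → ℝ := Function.update f a (min u (f a)) with hg
    have hgle : ∀ x, g x ≤ f x := by
      intro x
      by_cases hx : x = a
      · subst hx; simp [hg, Function.update_self, min_le_right]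
      · simp [hg, Function.update_of_ne hx]
    have hgnn : ∀ x, 0 ≤ g x := by
      intro x
      by_cases hx : x = a
      · subst hx
        simp only [hg, Function.update_self, le_min_iff]
        exact ⟨le_trans (hnn _) hu0, hfnn _⟩
      · simp [hg, Function.update_of_ne hx, hfnn x]
    have hga : g a = min u (f a) := by simp [hg]
    have hgP : MemP δ g := by
      refine ⟨hgnn, ?_⟩
      intro B
      by_cases haB : a ∈ B
      · -- write B = insert a (B.erase a)
        have hsup : B.sup id = a ⊔ (B.erase a).sup id := by
          conv_lhs => rw [← Finset.insert_erase haB]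
          rw [Finset.sup_insert]; rfl
        have hmemS : δ (a ⊔ (B.erase a).sup id) - ∑ b ∈ B.erase a, f b ∈
            {r : ℝ | ∃ C : Finset L, r = δ (a ⊔ C.sup id) - ∑ b ∈ C, f b} :=
          ⟨B.erase a, rfl⟩
        have h1 : δ (a ⊔ (B.erase a).sup id) - ∑ b ∈ B.erase a, f b ≤ u := hu hmemS
        have h2 : δ (a ⊔ (B.erase a).sup id) - ∑ b ∈ B.erase a, f b ≤ f a :=
          hub f hfP a hmemS
        have hsum : ∑ b ∈ B, g b = g a + ∑ b ∈ B.erase a, g b :=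
          (Finset.add_sum_erase B g haB).symm
        have hsame : ∑ b ∈ B.erase a, g b = ∑ b ∈ B.erase a, f b := by
          refine Finset.sum_congr rfl ?_
          intro x hx
          have : x ≠ a := Finset.ne_of_mem_erase hx
          simp [hg, Function.update_of_ne this]
        rw [hsup, hsum, hsame, hga]
        rcases le_total u (f a) with h | h
        · rw [min_eq_left h]; linarith
        · rw [min_eq_right h]; linarith
      · have hsame : ∑ b ∈ B, g b = ∑ b ∈ B, f b := by
          refine Finset.sum_congr rfl ?_
          intro x hx
          have : x ≠ a := by rintro rfl; exact haB hx
          simp [hg, Function.update_of_ne this]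
        rw [hsame]
        exact hfP.2 B
    have := hmin g hgP hgle
    have : g a = f a := by rw [this]
    rw [hga] at this
    rcases le_total u (f a) with h | h
    · rw [min_eq_left h] at this; linarith
    · exact h
  · intro hlub
    have hfub : ∀ a : L, (f a) ∈ upperBounds
        {r : ℝ | ∃ B : Finset L, r = δ (a ⊔ B.sup id) - ∑ b ∈ B, f b} := fun a => (hlub a).1
    have hfP : MemP δ f := by
      refine ⟨hfnn, ?_⟩
      intro B
      rcases B.eq_empty_or_nonempty with rfl | ⟨a, haB⟩
      · simp [hbot]
      · have hsup : B.sup id = a ⊔ (B.erase a).sup id := by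
          conv_lhs => rw [← Finset.insert_erase haB]
          rw [Finset.sup_insert]; rfl
        have h1 : δ (a ⊔ (B.erase a).sup id) - ∑ b ∈ B.erase a, f b ≤ f a :=
          hfub a ⟨B.erase a, rfl⟩
        have hsum : ∑ b ∈ B, f b = f a + ∑ b ∈ B.erase a, f b :=
          (Finset.add_sum_erase B f haB).symm
        rw [hsup, hsum]
        linarith
    refine ⟨hfP, ?_⟩
    intro g hgP hgle
    funext a
    refine le_antisymm (hgle a) ?_
    -- show `g a` is an upper bound of the set, then use LUB
    have : g a ∈ upperBounds {r : ℝ | ∃ B : Finset L, r = δ (a ⊔ B.sup id) - ∑ b ∈ B, f b} := by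
      rintro r ⟨B, rfl⟩
      have h1 : δ ((insert a B).sup id) ≤ ∑ b ∈ insert a B, g b := hgP.2 (insert a B)
      rw [Finset.sup_insert] at h1
      simp only [id] at h1
      have h2 := sum_insert_le' g hgP.1 a B
      have h3 : ∑ b ∈ B, g b ≤ ∑ b ∈ B, f b := Finset.sum_le_sum fun x _ => hgle x
      linarith
    exact (hlub a).2 this
end

section
/- Let (L, δ) be a lattice diversity and let f be an element of the tight span T_L. Then f is monotone: for all a, b ∈ L, a ≤ b implies f(a) ≤ f(b). -/
theorem stmt_13 {L : Type*} [Lattice L] [OrderBot L] (δ : L → ℝ)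
    (hδ : IsLatticeDiversity δ) (f : L → ℝ) (hf : MemT δ f) :
    ∀ a b : L, a ≤ b → f a ≤ f b := by
  classical
  intro a b hab
  obtain ⟨⟨hf0, hfB⟩, hmin⟩ := hf
  set g : L → ℝ := fun c => if c = a then min (f a) (f b) else f c with hg
  have hgP : MemP δ g := by
    constructor
    · intro c
      by_cases h : c = a <;> simp [hg, h, le_min, hf0]
    · intro B
      by_cases haB : a ∈ B
      · have hB : B = insert a (B.erase a) := (Finset.insert_erase haB).symm
        have hsum : ∑ c ∈ B, g c = min (f a) (f b) + ∑ c ∈ B.erase a, f c := by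
          conv_lhs => rw [hB, Finset.sum_insert (Finset.notMem_erase a B)]
          congr 1
          · simp [hg]
          · apply Finset.sum_congr rfl
            intro c hc
            have hca : c ≠ a := (Finset.mem_erase.mp hc).1
            simp [hg, hca]
        rw [hsum]
        rcases min_cases (f a) (f b) with ⟨hm, _⟩ | ⟨hm, _⟩
        · rw [hm]
          calc δ (B.sup id) ≤ ∑ c ∈ B, f c := hfB B
            _ = f a + ∑ c ∈ B.erase a, f c := by
                conv_lhs => rw [hB, Finset.sum_insert (Finset.notMem_erase a B)]
        · rw [hm]
          have h1 : δ (B.sup id) ≤ δ ((insert b (B.erase a)).sup id) := by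
            apply hδ.2.2.1
            conv_lhs => rw [hB]
            simp only [Finset.sup_insert, id]
            exact sup_le_sup_right hab _
          have h2 : δ ((insert b (B.erase a)).sup id) ≤ ∑ c ∈ insert b (B.erase a), f c :=
            hfB _
          have h3 : ∑ c ∈ insert b (B.erase a), f c ≤ f b + ∑ c ∈ B.erase a, f c := by
            by_cases hb : b ∈ B.erase a
            · rw [Finset.insert_eq_self.mpr hb]
              linarith [hf0 b]
            · rw [Finset.sum_insert hb]
          linarith
      · have hsum : ∑ c ∈ B, g c = ∑ c ∈ B, f c := by
          apply Finset.sum_congr rfl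
          intro c hc
          have hca : c ≠ a := fun h => haB (h ▸ hc)
          simp [hg, hca]
        rw [hsum]
        exact hfB B
  have hgle : ∀ c, g c ≤ f c := by
    intro c
    by_cases h : c = a <;> simp [hg, h, min_le_left]
  have hgf := hmin g hgP hgle
  have ha : min (f a) (f b) = f a := by
    have := congrFun hgf a
    simpa [hg] using this
  calc f a = min (f a) (f b) := ha.symm
    _ ≤ f b := min_le_right _ _
end

section
/- Let (L, δ) be a lattice diversity and let f be an element of the tight span T_L. Then for all a, b, c ∈ L with b ≠ 0, f(a ∨ c) ≤ δ(a ∨ b) + f(b ∨ c). -/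
theorem stmt_14 {L : Type*} [Lattice L] [OrderBot L] (δ : L → ℝ)
    (hδ : IsLatticeDiversity δ) (f : L → ℝ) (hf : MemT δ f) :
    ∀ a b c : L, b ≠ ⊥ → f (a ⊔ c) ≤ δ (a ⊔ b) + f (b ⊔ c) := by
  classical
  obtain ⟨hδ0, _, hmono, hsub⟩ := hδ
  obtain ⟨⟨hf0, hfB⟩, hmin⟩ := hf
  intro a b c hb
  by_contra hlt
  push_neg at hlt
  set v : ℝ := δ (a ⊔ b) + f (b ⊔ c) with hv
  set g : L → ℝ := Function.update f (a ⊔ c) v with hg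
  have hv0 : 0 ≤ v := add_nonneg (hδ0 _) (hf0 _)
  have hgP : MemP δ g := by
    constructor
    · intro x
      rcases eq_or_ne x (a ⊔ c) with h | h
      · simpa [hg, h] using hv0
      · simpa [hg, Function.update_of_ne h] using hf0 x
    · intro B
      by_cases hm : (a ⊔ c) ∈ B
      · have hsum : ∑ x ∈ B, g x = v + ∑ x ∈ B.erase (a ⊔ c), f x := by
          rw [hg, Finset.sum_update_of_mem hm]
          simp [Finset.sdiff_singleton_eq_erase]
        set S : L := (B.erase (a ⊔ c)).sup id with hS
        have hsup : B.sup id = (a ⊔ c) ⊔ S := by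
          conv_lhs => rw [← Finset.insert_erase hm]
          simp [hS]
        -- bound on the insert sum
        have hins : δ ((b ⊔ c) ⊔ S) ≤ f (b ⊔ c) + ∑ x ∈ B.erase (a ⊔ c), f x := by
          have h1 : δ ((b ⊔ c) ⊔ S) = δ ((insert (b ⊔ c) (B.erase (a ⊔ c))).sup id) := by
            simp [hS]
          rw [h1]
          by_cases hmem : (b ⊔ c) ∈ B.erase (a ⊔ c)
          · rw [Finset.insert_eq_self.mpr hmem]
            have := hfB (B.erase (a ⊔ c))
            have h2 : 0 ≤ f (b ⊔ c) := hf0 _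
            linarith
          · calc δ ((insert (b ⊔ c) (B.erase (a ⊔ c))).sup id)
                ≤ ∑ x ∈ insert (b ⊔ c) (B.erase (a ⊔ c)), f x := hfB _
              _ = f (b ⊔ c) + ∑ x ∈ B.erase (a ⊔ c), f x :=
                  Finset.sum_insert hmem
        have hne : (a ⊔ b) ⊓ ((b ⊔ c) ⊔ S) ≠ ⊥ := by
          intro h
          apply hb
          have : b ≤ (a ⊔ b) ⊓ ((b ⊔ c) ⊔ S) :=
            le_inf (le_sup_right) (le_trans le_sup_left le_sup_left)
          exact le_bot_iff.mp (h ▸ this)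
        have hchain : δ (B.sup id) ≤ δ (a ⊔ b) + δ ((b ⊔ c) ⊔ S) := by
          rw [hsup]
          calc δ ((a ⊔ c) ⊔ S)
              ≤ δ ((a ⊔ b) ⊔ ((b ⊔ c) ⊔ S)) := by
                apply hmono
                apply sup_le (sup_le _ _) _
                · exact le_trans le_sup_left le_sup_left
                · exact le_trans le_sup_right (le_trans le_sup_left le_sup_right)
                · exact le_trans le_sup_right le_sup_right
            _ ≤ δ (a ⊔ b) + δ ((b ⊔ c) ⊔ S) := hsub _ _ hne
        rw [hsum, hv]
        linarith
      · have : ∑ x ∈ B, g x = ∑ x ∈ B, f x := by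
          refine Finset.sum_congr rfl fun x hx => ?_
          have : x ≠ a ⊔ c := fun h => hm (h ▸ hx)
          simp [hg, Function.update_of_ne this]
        rw [this]; exact hfB B
  have hle : ∀ x : L, g x ≤ f x := by
    intro x
    rcases eq_or_ne x (a ⊔ c) with h | h
    · subst h; simp only [hg, Function.update_self]; exact le_of_lt hlt
    · simp [hg, Function.update_of_ne h]
  have heq := hmin g hgP hle
  have : g (a ⊔ c) = f (a ⊔ c) := by rw [heq]
  simp only [hg, Function.update_self] at this
  linarith
end

section
/- Let (L, δ) be a lattice diversity and let f be an element of the tight span T_L. Then f is subadditive: for all a, b ∈ L, f(a ∨ b) ≤ f(a) + f(b). -/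
/-!
Lowering the value of an element of `P_L` at `a ⊔ b` to `f a + f b` keeps it in `P_L`: a finite
family containing `a ⊔ b` has the same join as the family with `a ⊔ b` replaced by `a` and `b`.
Minimality of `f` therefore forbids `f (a ⊔ b) > f a + f b`.
-/

theorem Finset.sum_insert_le_add {ι M : Type*} [DecidableEq ι] [AddCommMonoid M] [Preorder M]
    [AddRightMono M] {f : ι → M} {i : ι} (hi : 0 ≤ f i) (s : Finset ι) :
    ∑ j ∈ insert i s, f j ≤ f i + ∑ j ∈ s, f j := by
  by_cases h : i ∈ s
  · rw [Finset.insert_eq_of_mem h]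
    exact le_add_of_nonneg_left hi
  · exact (Finset.sum_insert h).le

theorem MemP.update_sup {L : Type*} [Lattice L] [OrderBot L] [DecidableEq L] {δ f : L → ℝ}
    (hf : MemP δ f) (a b : L) {v : ℝ} (hv : f a + f b ≤ v) :
    MemP δ (Function.update f (a ⊔ b) v) := by
  obtain ⟨hf_nonneg, hf_sum⟩ := hf
  refine ⟨fun c => ?_, fun B => ?_⟩
  · rcases eq_or_ne c (a ⊔ b) with rfl | hc
    · simpa using (add_nonneg (hf_nonneg a) (hf_nonneg b)).trans hv
    · simpa [hc] using hf_nonneg c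
  by_cases hB : a ⊔ b ∈ B
  · set B' := B \ {a ⊔ b}
    have hsup : B.sup id = (insert a (insert b B')).sup id := by
      rw [← Finset.insert_erase hB, ← Finset.sdiff_singleton_eq_erase]
      simp [B', sup_assoc]
    rw [Finset.sum_update_of_mem hB, hsup]
    calc δ ((insert a (insert b B')).sup id)
        ≤ ∑ c ∈ insert a (insert b B'), f c := hf_sum _
      _ ≤ f a + (f b + ∑ c ∈ B', f c) :=
          (Finset.sum_insert_le_add (hf_nonneg a) _).trans
            (add_le_add_right (Finset.sum_insert_le_add (hf_nonneg b) _) _)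
      _ ≤ v + ∑ c ∈ B', f c := by linarith
  · rw [Finset.sum_update_of_notMem hB]
    exact hf_sum B

theorem stmt_15_general {L : Type*} [Lattice L] [OrderBot L] (δ : L → ℝ)
    (f : L → ℝ) (hf : MemT δ f) :
    ∀ a b : L, f (a ⊔ b) ≤ f a + f b := by
  classical
  intro a b
  by_contra! h
  have hle : Function.update f (a ⊔ b) (f a + f b) ≤ f :=
    (Function.update_mono h.le).trans_eq (Function.update_eq_self _ _)
  have heq := congrFun (hf.2 _ (hf.1.update_sup a b le_rfl) hle) (a ⊔ b)
  simp only [Function.update_self] at heq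
  linarith

theorem stmt_15 {L : Type*} [Lattice L] [OrderBot L] (δ : L → ℝ)
    (hδ : IsLatticeDiversity δ) (f : L → ℝ) (hf : MemT δ f) :
    ∀ a b : L, f (a ⊔ b) ≤ f a + f b :=
  stmt_15_general δ f hf
end

section
/- Let (L, δ) be a lattice diversity and for x ∈ L define h_x : L → ℝ≥0 by h_x(a) = δ(x ∨ a). If x ≠ 0, then h_x ∈ P_L; that is, for every finite subset B of L, ∑_{b ∈ B} δ(x ∨ b) ≥ δ(⋁ B). -/
theorem stmt_16 {L : Type*} [Lattice L] [OrderBot L] (δ : L → ℝ)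
    (hδ : IsLatticeDiversity δ) (x : L) (hx : x ≠ ⊥) :
    MemP δ (fun a => δ (x ⊔ a)) := by
  obtain ⟨hnn, hzero, hmono, hsub⟩ := hδ
  refine ⟨fun a => hnn _, ?_⟩
  have key : ∀ B : Finset L, B.Nonempty → δ (x ⊔ B.sup id) ≤ ∑ b ∈ B, δ (x ⊔ b) := by
    intro B hB
    induction hB using Finset.Nonempty.cons_induction with
    | singleton a => simp
    | cons a B ha hB ih =>
      rw [Finset.sup_cons, Finset.sum_cons]
      have heq : x ⊔ (id a ⊔ B.sup id) = (x ⊔ a) ⊔ (x ⊔ B.sup id) := by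
        simp [id]
        rw [sup_sup_sup_comm, sup_idem]
      rw [heq]
      have hmeet : (x ⊔ a) ⊓ (x ⊔ B.sup id) ≠ ⊥ := by
        intro h
        apply hx
        have : x ≤ (x ⊔ a) ⊓ (x ⊔ B.sup id) := le_inf le_sup_left le_sup_left
        simpa [h, le_bot_iff] using this
      calc δ ((x ⊔ a) ⊔ (x ⊔ B.sup id)) ≤ δ (x ⊔ a) + δ (x ⊔ B.sup id) := hsub _ _ hmeet
        _ ≤ δ (x ⊔ a) + ∑ b ∈ B, δ (x ⊔ b) := by linarith
  intro B
  rcases B.eq_empty_or_nonempty with rfl | hB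
  · simpa using le_of_eq ((hzero ⊥).mpr (Or.inl rfl))
  · calc δ (B.sup id) ≤ δ (x ⊔ B.sup id) := hmono _ _ le_sup_right
      _ ≤ ∑ b ∈ B, δ (x ⊔ b) := key B hB
end

section
/- Let (L, δ) be a lattice diversity and for x ∈ L define h_x : L → ℝ≥0 by h_x(a) = δ(x ∨ a). If x is an atom of L, then h_x belongs to the tight span T_L, i.e., h_x is a minimal element of P_L under the pointwise order. -/
theorem stmt_17 {L : Type*} [Lattice L] [OrderBot L] (δ : L → ℝ)
    (hδ : IsLatticeDiversity δ) (x : L) (hx : IsAtom x) :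
    MemT δ (fun a => δ (x ⊔ a)) := by
  obtain ⟨hnn, hzero, hmono, hsub⟩ := hδ
  have hxbot : x ≠ ⊥ := hx.1
  have hδbot : δ ⊥ = 0 := (hzero ⊥).mpr (Or.inl rfl)
  have hδx : δ x = 0 := (hzero x).mpr (Or.inr hx)
  -- key claim: for nonempty B, δ (x ⊔ B.sup id) ≤ ∑ b ∈ B, δ (x ⊔ b)
  have key : ∀ B : Finset L, B.Nonempty → δ (x ⊔ B.sup id) ≤ ∑ b ∈ B, δ (x ⊔ b) := by
    intro B hB
    induction hB using Finset.Nonempty.cons_induction with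
    | singleton a => simp
    | cons a s ha hs ih =>
      rw [Finset.sup_cons, Finset.sum_cons]
      have hmeet : (x ⊔ a) ⊓ (x ⊔ s.sup id) ≠ ⊥ := by
        intro h
        exact hxbot (le_bot_iff.mp (h ▸ le_inf le_sup_left le_sup_left))
      have h2 : δ (x ⊔ (id a ⊔ s.sup id)) ≤ δ (x ⊔ a) + δ (x ⊔ s.sup id) := by
        calc δ (x ⊔ (id a ⊔ s.sup id)) = δ ((x ⊔ a) ⊔ (x ⊔ s.sup id)) := by
              rw [sup_sup_distrib_left]; rfl
          _ ≤ δ (x ⊔ a) + δ (x ⊔ s.sup id) := hsub _ _ hmeet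
      exact h2.trans (by linarith)
  have hP : MemP δ (fun a => δ (x ⊔ a)) := by
    refine ⟨fun a => hnn _, fun B => ?_⟩
    rcases B.eq_empty_or_nonempty with rfl | hB
    · simp [hδbot]
    · exact le_trans (hmono _ _ le_sup_right) (key B hB)
  refine ⟨hP, fun g hg hle => ?_⟩
  classical
  funext a
  have hgx : g a + g x ≥ δ (x ⊔ a) := by
    have := hg.2 {x, a}
    rcases eq_or_ne a x with rfl | hne
    · simpa using le_trans this (le_add_of_nonneg_left (hg.1 a))
    · rw [Finset.sum_pair (Ne.symm hne)] at this
      simp only [Finset.sup_insert, Finset.sup_singleton, id] at this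
      linarith
  have hgx0 : g x = 0 := by
    have h1 : g x ≤ δ (x ⊔ x) := hle x
    rw [sup_idem, hδx] at h1
    exact le_antisymm h1 (hg.1 x)
  have h2 : δ (x ⊔ a) ≤ g a := by linarith
  exact le_antisymm (hle a) h2
end
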